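/- Let F : ℝ^n → ℝ^n be differentiable with component functions F_i, and suppose a_ij := sup_{x ∈ ℝ^n} |∂F_i/∂x_j (x)| is finite for all i, j. Let L ≥ 1, let D = [d_ij] be a delay matrix with entries in {0,…,L}, and let F_D : ℝ^{n(L+1)} → ℝ^{n(L+1)} be the delayed version of F. Then for all indices (i,ℓ) and (j,m), sup_{z ∈ ℝ^{n(L+1)}} |∂(F_D)_{(i,ℓ)}/∂z_{(j,m)} (z)| = (A_D)_{(i,ℓ),(j,m)}, where A = [a_ij] and A_D is the delayed matrix of A. That is, the Lipschitz-linearization of the delayed map equals the delayed version of the Lipschitz-linearization: Λ ∘ τ_{L,D} = τ_{L,D} ∘ Λ. -/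

import Mathlib

open Matrix BigOperators

def delayedMapR {n L : ℕ} (F : (Fin n → ℝ) → Fin n → ℝ)
    (D : Fin n → Fin n → Fin (L + 1)) :
    ((Fin n × Fin (L + 1)) → ℝ) → (Fin n × Fin (L + 1)) → ℝ :=
  fun z p =>
    if h : (p.2 : ℕ) = 0 then F (fun j => z (j, D p.1 j)) p.1
    else z (p.1, ⟨(p.2 : ℕ) - 1, by have := p.2.isLt; omega⟩)

def delayedMatrix {n L : ℕ} (A : Matrix (Fin n) (Fin n) ℝ)
    (D : Fin n → Fin n → Fin (L + 1)) :
    Matrix (Fin n × Fin (L + 1)) (Fin n × Fin (L + 1)) ℝ :=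
  fun p q =>
    if (p.2 : ℕ) = 0 then (if D p.1 q.1 = q.2 then A p.1 q.1 else 0)
    else if p.1 = q.1 ∧ (q.2 : ℕ) + 1 = (p.2 : ℕ) then 1 else 0

/-! The row `(i, ℓ + 1)` of `F_D` is the coordinate projection `z ↦ z_{(i,ℓ)}`,
whose derivative is the constant row `e_{(i,ℓ)}`. The row `(i, 0)` is `F_i ∘ π_i`, where the
linear map `π_i z = (z_{(j, d_ij)})_j` is surjective, so by the chain rule its partial
derivatives are those of `F_i` along `π_i e_{(j,m)}`, which is `e_j` if `m = d_ij` and `0`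
otherwise; surjectivity of `π_i` makes the suprema over `z` and over `x = π_i z` coincide. -/

theorem Function.Surjective.iSup_comp_of_supSet {α : Type*} {ι ι' : Sort*} [SupSet α]
    {f : ι → ι'} (hf : Function.Surjective f) (g : ι' → α) : ⨆ x, g (f x) = ⨆ y, g y :=
  congrArg sSup (hf.range_comp g)

section Delayed

variable {n L : ℕ} (D : Fin n → Fin n → Fin (L + 1))

/-- The argument `(z_{(1,d_{i1})}, …, z_{(n,d_{in})})` of `F_i` in the delayed map. -/
def delayedInput (i : Fin n) : ((Fin n × Fin (L + 1)) → ℝ) →L[ℝ] (Fin n → ℝ) :=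
  ContinuousLinearMap.pi fun j => ContinuousLinearMap.proj (j, D i j)

@[simp]
theorem delayedInput_apply (i : Fin n) (z : (Fin n × Fin (L + 1)) → ℝ) (j : Fin n) :
    delayedInput D i z j = z (j, D i j) :=
  rfl

theorem delayedInput_surjective (i : Fin n) : Function.Surjective (delayedInput D i) :=
  fun x => ⟨fun r => x r.1, rfl⟩

theorem delayedInput_single (i : Fin n) (q : Fin n × Fin (L + 1)) :
    delayedInput D i (Pi.single q 1) = if D i q.1 = q.2 then Pi.single q.1 1 else 0 := by
  ext j
  by_cases hj : j = q.1
  · subst hj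
    split_ifs with hq
    · rw [delayedInput_apply, hq]
      simp
    · simp [Prod.ext_iff, hq]
  · split_ifs <;> simp [Prod.ext_iff, hj]

theorem delayedMatrix_apply_zero (A : Matrix (Fin n) (Fin n) ℝ) (i : Fin n)
    (q : Fin n × Fin (L + 1)) :
    delayedMatrix A D (i, 0) q = if D i q.1 = q.2 then A i q.1 else 0 := by
  simp [delayedMatrix]

theorem delayedMatrix_apply_succ (A : Matrix (Fin n) (Fin n) ℝ) (i : Fin n) (ℓ : Fin L)
    (q : Fin n × Fin (L + 1)) :
    delayedMatrix A D (i, ℓ.succ) q =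
      (Pi.single (i, ℓ.castSucc) 1 : (Fin n × Fin (L + 1)) → ℝ) q := by
  simp only [delayedMatrix, Fin.val_succ, Nat.add_one_ne_zero, if_false, Pi.single_apply,
    Prod.ext_iff, Fin.ext_iff, Fin.val_castSucc]
  grind

variable (F : (Fin n → ℝ) → Fin n → ℝ)

theorem delayedMapR_apply_zero (z : (Fin n × Fin (L + 1)) → ℝ) (i : Fin n) :
    delayedMapR F D z (i, 0) = F (delayedInput D i z) i :=
  rfl

theorem delayedMapR_apply_succ (z : (Fin n × Fin (L + 1)) → ℝ) (i : Fin n) (ℓ : Fin L) :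
    delayedMapR F D z (i, ℓ.succ) = z (i, ℓ.castSucc) :=
  rfl

variable {F}

theorem differentiable_delayedMapR (hF : Differentiable ℝ F) :
    Differentiable ℝ (delayedMapR F D) := by
  refine differentiable_pi.2 fun ⟨i, ℓ⟩ => ?_
  induction ℓ using Fin.cases with
  | zero => exact (differentiable_apply i).comp (hF.comp (delayedInput D i).differentiable)
  | succ ℓ => exact differentiable_apply _

theorem fderiv_delayedMapR_apply (hF : Differentiable ℝ F) (z v : (Fin n × Fin (L + 1)) → ℝ)
    (p : Fin n × Fin (L + 1)) :
    fderiv ℝ (delayedMapR F D) z v p = fderiv ℝ (fun z => delayedMapR F D z p) z v := by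
  rw [fderiv_apply (differentiable_delayedMapR D hF z)]
  rfl

theorem fderiv_delayedMapR_apply_zero (hF : Differentiable ℝ F)
    (z v : (Fin n × Fin (L + 1)) → ℝ) (i : Fin n) :
    fderiv ℝ (delayedMapR F D) z v (i, 0) =
      fderiv ℝ F (delayedInput D i z) (delayedInput D i v) i := by
  have hcomp : (fun z => delayedMapR F D z (i, 0)) = (fun x => F x i) ∘ delayedInput D i :=
    funext fun z => delayedMapR_apply_zero D F z i
  rw [fderiv_delayedMapR_apply D hF, hcomp,
    fderiv_comp z ((differentiable_pi.1 hF i) _) (delayedInput D i).differentiableAt,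
    ContinuousLinearMap.fderiv, fderiv_apply (hF _)]
  rfl

theorem fderiv_delayedMapR_apply_succ (hF : Differentiable ℝ F)
    (z v : (Fin n × Fin (L + 1)) → ℝ) (i : Fin n) (ℓ : Fin L) :
    fderiv ℝ (delayedMapR F D) z v (i, ℓ.succ) = v (i, ℓ.castSucc) := by
  have hcoord : (fun z => delayedMapR F D z (i, ℓ.succ)) = fun z => z (i, ℓ.castSucc) :=
    funext fun z => delayedMapR_apply_succ D F z i ℓ
  rw [fderiv_delayedMapR_apply D hF, hcoord,
    (hasFDerivAt_apply (𝕜 := ℝ) (i, ℓ.castSucc) z).fderiv]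
  rfl

end Delayed

theorem stmt14_general {n L : ℕ}
    (F : (Fin n → ℝ) → Fin n → ℝ) (hF : Differentiable ℝ F)
    (A : Matrix (Fin n) (Fin n) ℝ)
    (hA : ∀ i j, A i j = ⨆ x, |fderiv ℝ F x (Pi.single j 1) i|)
    (D : Fin n → Fin n → Fin (L + 1)) :
    ∀ p q : Fin n × Fin (L + 1),
      (⨆ z : (Fin n × Fin (L + 1)) → ℝ,
          |fderiv ℝ (delayedMapR F D) z (Pi.single q 1) p|) =
        delayedMatrix A D p q := by
  rintro ⟨i, ℓ⟩ q
  induction ℓ using Fin.cases with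
  | zero =>
    simp only [fderiv_delayedMapR_apply_zero D hF, delayedInput_single, delayedMatrix_apply_zero]
    split_ifs
    · exact ((delayedInput_surjective D i).iSup_comp_of_supSet
        fun x => |fderiv ℝ F x (Pi.single q.1 1) i|).trans (hA i q.1).symm
    · simp
  | succ ℓ =>
    simp only [fderiv_delayedMapR_apply_succ D hF, delayedMatrix_apply_succ, Pi.single_comm q,
      ciSup_const]
    rw [Pi.single_apply]
    split_ifs <;> simp

theorem stmt14 {n L : ℕ} (hL : 1 ≤ L)
    (F : (Fin n → ℝ) → Fin n → ℝ) (hF : Differentiable ℝ F)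
    (A : Matrix (Fin n) (Fin n) ℝ)
    (hbdd : ∀ i j, BddAbove (Set.range fun x => |fderiv ℝ F x (Pi.single j 1) i|))
    (hA : ∀ i j, A i j = ⨆ x, |fderiv ℝ F x (Pi.single j 1) i|)
    (D : Fin n → Fin n → Fin (L + 1)) :
    ∀ p q : Fin n × Fin (L + 1),
      (⨆ z : (Fin n × Fin (L + 1)) → ℝ,
          |fderiv ℝ (delayedMapR F D) z (Pi.single q 1) p|) =
        delayedMatrix A D p q :=
  stmt14_general F hF A hA D
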